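/- There exists an absolute constant C₀ > 0 such that the following holds. Let E be a real-valued random variable and M > 0 a parameter such that for all α > 0, P(E ≥ αM) ≤ e^{−α²/2} and P(E ≤ −αM) ≤ e^{−α²/2}. Let λ > 0, set Δ = 2λM, and let b(E) be the random variable obtained by rounding E to the nearest integer multiple of Δ. Then the base-2 Shannon entropy of b(E) satisfies H(b(E)) ≤ G(λ), where G(λ) = C₀ e^{−λ²/9} if λ ≥ 10, G(λ) = C₀ if 0.1 < λ < 10, and G(λ) = −C₀ log₂(λ) if λ ≤ 0.1. -/

import Mathlib

/-!
Let `p z = P(round (E / Δ) = z)`. Rounding moves `E / Δ` by at most `1/2`, so on the atom `z ≠ 0`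
we have `|E| ≥ |z| λ M`, and the tail bounds give `p z ≤ 2 e^{-(λz)²/2}` and
`1 - p 0 ≤ 2 e^{-λ²/2}`. Bounding `-p log p` by `1 - p` at `z = 0` and by `2 √p ≤ 4 e^{-λ²|z|/4}`
elsewhere, the entropy (in nats) is at most `2 e^{-λ²/2} + 8 / (e^{λ²/4} - 1)`, which settles
`λ > 0.1`. For small `λ` this geometric series is of order `1/λ²`; there Gibbs' inequality
`-p log p ≤ p log (1/q) + q - p` with `q = λ²/4` is used on the atoms `|z| ≤ 4/λ²`, costing
`log (4/λ²)`, while the remaining atoms still contribute `O(1)` through the `√p` bound.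
-/

open MeasureTheory

noncomputable section

/-- The base-2 Shannon entropy `H(X) = −Σ_z P(X = z) log₂ P(X = z)` of an
integer-valued random variable `X` on a probability space `(Ω, μ)`. -/
def intEntropy {Ω : Type*} [MeasurableSpace Ω] (μ : Measure Ω) (X : Ω → ℤ) : ℝ :=
  -∑' z : ℤ, (μ (X ⁻¹' {z})).toReal * Real.logb 2 (μ (X ⁻¹' {z})).toReal

open Real

lemma negMulLog_le_mul_log_inv_add_sub {p q : ℝ} (hp : 0 ≤ p) (hq : 0 < q) :
    negMulLog p ≤ p * log q⁻¹ + q - p := by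
  rcases hp.eq_or_lt with rfl | hp
  · simpa using hq.le
  have hlog := log_le_sub_one_of_pos (div_pos hq hp)
  rw [log_div hq.ne' hp.ne'] at hlog
  have : p * (log q - log p) ≤ p * (q / p - 1) := mul_le_mul_of_nonneg_left hlog hp.le
  rw [mul_sub, mul_sub, mul_div_cancel₀ _ hp.ne'] at this
  rw [negMulLog, log_inv]
  linarith

lemma negMulLog_le_two_mul_sqrt {p : ℝ} (hp : 0 ≤ p) : negMulLog p ≤ 2 * √p := by
  rcases hp.eq_or_lt with rfl | hp
  · simp
  have h := negMulLog_le_mul_log_inv_add_sub hp.le (sqrt_pos.2 hp)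
  rw [log_inv, log_sqrt hp.le] at h
  have : p * -(log p / 2) = negMulLog p / 2 := by rw [negMulLog]; ring
  linarith

lemma negMulLog_le_four_mul_exp {x a : ℝ} (hx : 0 ≤ x) (hxa : x ≤ 2 * exp (-a)) :
    negMulLog x ≤ 4 * exp (-a / 2) := by
  calc negMulLog x ≤ 2 * √x := negMulLog_le_two_mul_sqrt hx
    _ ≤ 2 * √(2 ^ 2 * exp (-a)) := by gcongr; linarith [exp_pos (-a)]
    _ = 4 * exp (-a / 2) := by
      rw [sqrt_mul (by positivity), sqrt_sq zero_le_two, exp_half]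
      ring

lemma hasSum_exp_neg_mul_succ {a : ℝ} (ha : 0 < a) :
    HasSum (fun n : ℕ => exp (-(a * (n + 1 : ℕ)))) (exp a - 1)⁻¹ := by
  have h := (hasSum_geometric_of_lt_one (exp_pos _).le
    (exp_lt_one_iff.2 (neg_lt_zero.2 ha))).mul_left (exp (-a))
  have hsum : exp (-a) * (1 - exp (-a))⁻¹ = (exp a - 1)⁻¹ := by
    have : 1 < exp a := one_lt_exp_iff.2 ha
    rw [exp_neg]
    field_simp
  have hterm : (fun n : ℕ => exp (-(a * (n + 1 : ℕ)))) = fun n => exp (-a) * exp (-a) ^ n := by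
    ext n
    rw [← exp_nat_mul, ← exp_add]
    push_cast
    ring_nf
  rwa [hterm, ← hsum]

lemma inv_exp_sub_one_le_inv {a : ℝ} (ha : 0 < a) : (exp a - 1)⁻¹ ≤ a⁻¹ :=
  inv_anti₀ ha (by linarith [add_one_le_exp a])

lemma exp_neg_mul_sq_le {a x : ℝ} (ha : 0 < a) (ha1 : a ≤ 1) (hx : 1 ≤ a * x) :
    exp (-(a * x ^ 2)) ≤ a * exp (-(a * x)) := by
  have hx1 : a⁻¹ ≤ x := by rw [inv_le_iff_one_le_mul₀' ha]; exact hx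
  have h1 : 1 ≤ a⁻¹ := one_le_inv₀ ha |>.2 ha1
  have key : a⁻¹ ≤ exp (a * x ^ 2 - a * x) := calc
    a⁻¹ ≤ exp (a⁻¹ - 1) := by linarith [add_one_le_exp (a⁻¹ - 1)]
    _ ≤ exp (x - 1) := by gcongr
    _ ≤ exp (a * x ^ 2 - a * x) := exp_le_exp.2 (by nlinarith)
  calc exp (-(a * x ^ 2)) = exp (-(a * x)) * exp (-(a * x ^ 2 - a * x)) := by
        rw [← exp_add]; ring_nf
    _ ≤ exp (-(a * x)) * a := by
        gcongr
        rw [exp_neg]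
        exact (inv_le_comm₀ ha (exp_pos _)).1 key
    _ = a * exp (-(a * x)) := mul_comm _ _

lemma summable_of_le_natAbs {f : ℤ → ℝ} {g : ℕ → ℝ} (hf : ∀ z, 0 ≤ f z)
    (hg : Summable fun n => g (n + 1)) (hfg : ∀ z ≠ 0, f z ≤ g z.natAbs) : Summable f :=
  .of_add_one_of_neg_add_one
    (hg.of_nonneg_of_le (fun _ => hf _) fun n => hfg _ (by omega))
    (hg.of_nonneg_of_le (fun _ => hf _) fun n => hfg _ (by omega))

lemma tsum_le_of_le_natAbs {f : ℤ → ℝ} {g : ℕ → ℝ} {s : ℝ} (hf : Summable f)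
    (hg : HasSum (fun n => g (n + 1)) s) (hfg : ∀ z ≠ 0, f z ≤ g z.natAbs) :
    ∑' z, f z ≤ f 0 + 2 * s := by
  have hpos := hf.comp_injective (i := fun n : ℕ => (n + 1 : ℤ)) fun a b h => by simpa using h
  have hneg := hf.comp_injective (i := fun n : ℕ => -(n + 1 : ℤ)) fun a b h => by simpa using h
  have hpos_le : ∑' n : ℕ, f (n + 1) ≤ s :=
    hasSum_le (fun n => hfg _ (by omega)) hpos.hasSum hg
  have hneg_le : ∑' n : ℕ, f (-(n + 1)) ≤ s :=
    hasSum_le (fun n => hfg _ (by omega)) hneg.hasSum hg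
  rw [tsum_of_add_one_of_neg_add_one hpos hneg]
  linarith

lemma negMulLog_le_of_le_two_mul_exp {x lam : ℝ} {z : ℤ} (hx : 0 ≤ x)
    (hxz : x ≤ 2 * exp (-(lam * z) ^ 2 / 2)) :
    negMulLog x ≤ 4 * exp (-(lam ^ 2 / 4 * z.natAbs)) := by
  refine (negMulLog_le_four_mul_exp hx (a := (lam * z) ^ 2 / 2) (by rwa [← neg_div])).trans ?_
  have : (z.natAbs : ℝ) ≤ (z : ℝ) ^ 2 := by
    rw [Nat.cast_natAbs]; exact_mod_cast Int.natAbs_le_self_sq z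
  gcongr
  nlinarith [sq_nonneg lam]

lemma negMulLog_sub_mul_log_le {x lam : ℝ} {z : ℤ} (hlam : 0 < lam) (hlam2 : lam ≤ 2)
    (hx : 0 ≤ x) (hxz : z ≠ 0 → x ≤ 2 * exp (-(lam * z) ^ 2 / 2)) :
    negMulLog x - x * log (lam ^ 2 / 4)⁻¹ ≤ lam ^ 2 * exp (-(lam ^ 2 / 4 * z.natAbs)) := by
  set a := lam ^ 2 / 4 with ha_def
  have ha : 0 < a := by positivity
  have ha1 : a ≤ 1 := by nlinarith
  rcases le_or_gt (a * z.natAbs) 1 with hnear | hfar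
  · have hgibbs := negMulLog_le_mul_log_inv_add_sub hx ha
    have he : 1 / 4 ≤ exp (-(a * z.natAbs)) := calc
      (1 : ℝ) / 4 ≤ exp (-1) := by
        rw [exp_neg, one_div]; exact inv_anti₀ (exp_pos 1) (by linarith [exp_one_lt_d9])
      _ ≤ exp (-(a * z.natAbs)) := by gcongr
    nlinarith
  · have hz : z ≠ 0 := by rintro rfl; simp at hfar; linarith
    have hsq : (lam * z) ^ 2 / 2 / 2 = a * (z.natAbs : ℝ) ^ 2 := by
      rw [Nat.cast_natAbs, Int.cast_abs, sq_abs]; ring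
    calc negMulLog x - x * log a⁻¹ ≤ negMulLog x := by
          linarith [mul_nonneg hx (log_nonneg (one_le_inv₀ ha |>.2 ha1))]
      _ ≤ 4 * exp (-(a * (z.natAbs : ℝ) ^ 2)) := by
          rw [← hsq, ← neg_div]
          exact negMulLog_le_four_mul_exp hx (by rw [← neg_div]; exact hxz hz)
      _ ≤ 4 * (a * exp (-(a * z.natAbs))) := by gcongr; exact exp_neg_mul_sq_le ha ha1 hfar.le
      _ = lam ^ 2 * exp (-(a * z.natAbs)) := by rw [ha_def]; ring

section TailBounds

variable {p : ℤ → ℝ} {lam : ℝ}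

lemma summable_negMulLog_of_tail (hlam : 0 < lam) (hp0 : ∀ z, 0 ≤ p z) (hp : HasSum p 1)
    (htail : ∀ z ≠ 0, p z ≤ 2 * exp (-(lam * z) ^ 2 / 2)) :
    Summable fun z => negMulLog (p z) := by
  have hg := (hasSum_exp_neg_mul_succ (a := lam ^ 2 / 4) (by positivity)).mul_left 4
  have hnonneg : ∀ z, 0 ≤ negMulLog (p z) :=
    fun z => negMulLog_nonneg (hp0 z) (le_hasSum hp z fun w _ => hp0 w)
  exact summable_of_le_natAbs (g := fun n : ℕ => 4 * exp (-(lam ^ 2 / 4 * n))) hnonneg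
    hg.summable fun z hz => negMulLog_le_of_le_two_mul_exp (hp0 z) (htail z hz)

theorem tsum_negMulLog_le_of_tail (hlam : 0 < lam) (hp0 : ∀ z, 0 ≤ p z) (hp : HasSum p 1)
    (hcenter : 1 - p 0 ≤ 2 * exp (-lam ^ 2 / 2))
    (htail : ∀ z ≠ 0, p z ≤ 2 * exp (-(lam * z) ^ 2 / 2)) :
    ∑' z, negMulLog (p z) ≤ 2 * exp (-lam ^ 2 / 2) + 8 * (exp (lam ^ 2 / 4) - 1)⁻¹ := by
  have hg := (hasSum_exp_neg_mul_succ (a := lam ^ 2 / 4) (by positivity)).mul_left 4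
  have := tsum_le_of_le_natAbs (g := fun n : ℕ => 4 * exp (-(lam ^ 2 / 4 * n)))
    (summable_negMulLog_of_tail hlam hp0 hp htail) hg
    fun z hz => negMulLog_le_of_le_two_mul_exp (hp0 z) (htail z hz)
  linarith [negMulLog_le_one_sub_self (hp0 0)]

theorem tsum_negMulLog_le_log_of_tail (hlam : 0 < lam) (hlam2 : lam ≤ 2) (hp0 : ∀ z, 0 ≤ p z)
    (hp : HasSum p 1) (htail : ∀ z ≠ 0, p z ≤ 2 * exp (-(lam * z) ^ 2 / 2)) :
    ∑' z, negMulLog (p z) ≤ log (4 / lam ^ 2) + 9 := by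
  set a := lam ^ 2 / 4 with ha_def
  have ha : 0 < a := by positivity
  have hN := summable_negMulLog_of_tail hlam hp0 hp htail
  set f := fun z => negMulLog (p z) - p z * log a⁻¹
  have hsum_f : ∑' z, f z = ∑' z, negMulLog (p z) - log a⁻¹ := by
    rw [hN.tsum_sub (hp.summable.mul_right _), tsum_mul_right, hp.tsum_eq, one_mul]
  have hg := (hasSum_exp_neg_mul_succ ha).mul_left (lam ^ 2)
  have hf_le := tsum_le_of_le_natAbs (f := f) (g := fun n : ℕ => lam ^ 2 * exp (-(a * n)))
    (hN.sub (hp.summable.mul_right _)) hg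
    fun z hz => negMulLog_sub_mul_log_le hlam hlam2 (hp0 z) fun _ => htail z hz
  have hf0 : f 0 ≤ a := by
    have := negMulLog_le_mul_log_inv_add_sub (hp0 0) ha
    simp only [f]; linarith [hp0 0]
  have hgeom : lam ^ 2 * (exp a - 1)⁻¹ ≤ 4 := calc
    _ ≤ lam ^ 2 * a⁻¹ := mul_le_mul_of_nonneg_left (inv_exp_sub_one_le_inv ha) (by positivity)
    _ = 4 := by rw [ha_def]; field_simp
  have : a ≤ 1 := by nlinarith
  rw [ha_def, inv_div] at hsum_f
  linarith

theorem tsum_negMulLog_le_of_ten_le (h10 : 10 ≤ lam) (hp0 : ∀ z, 0 ≤ p z) (hp : HasSum p 1)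
    (hcenter : 1 - p 0 ≤ 2 * exp (-lam ^ 2 / 2))
    (htail : ∀ z ≠ 0, p z ≤ 2 * exp (-(lam * z) ^ 2 / 2)) :
    ∑' z, negMulLog (p z) ≤ 18 * exp (-lam ^ 2 / 9) := by
  have hS := tsum_negMulLog_le_of_tail (by linarith) hp0 hp hcenter htail
  have hhalf : exp (lam ^ 2 / 4) / 2 ≤ exp (lam ^ 2 / 4) - 1 := by
    nlinarith [add_one_le_exp (lam ^ 2 / 4)]
  have hgeom : (exp (lam ^ 2 / 4) - 1)⁻¹ ≤ 2 * exp (-lam ^ 2 / 4) := calc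
    _ ≤ (exp (lam ^ 2 / 4) / 2)⁻¹ := inv_anti₀ (by positivity) hhalf
    _ = 2 * exp (-lam ^ 2 / 4) := by rw [inv_div, neg_div, exp_neg]; ring
  have h2 : exp (-lam ^ 2 / 2) ≤ exp (-lam ^ 2 / 9) := exp_le_exp.2 (by nlinarith)
  have h4 : exp (-lam ^ 2 / 4) ≤ exp (-lam ^ 2 / 9) := exp_le_exp.2 (by nlinarith)
  linarith

theorem tsum_negMulLog_le_of_one_tenth_lt (hlam : 0.1 < lam) (hp0 : ∀ z, 0 ≤ p z)
    (hp : HasSum p 1) (hcenter : 1 - p 0 ≤ 2 * exp (-lam ^ 2 / 2))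
    (htail : ∀ z ≠ 0, p z ≤ 2 * exp (-(lam * z) ^ 2 / 2)) :
    ∑' z, negMulLog (p z) ≤ 3202 := by
  have hS := tsum_negMulLog_le_of_tail (by linarith) hp0 hp hcenter htail
  have hgeom : (exp (lam ^ 2 / 4) - 1)⁻¹ ≤ 400 := by
    refine (inv_exp_sub_one_le_inv (by positivity)).trans ?_
    rw [inv_le_comm₀ (by positivity) (by norm_num)]
    nlinarith
  have h1 : exp (-lam ^ 2 / 2) ≤ 1 := exp_le_one_iff.2 (by nlinarith)
  linarith

theorem tsum_negMulLog_le_neg_log (hlam : 0 < lam) (hlam1 : lam ≤ 0.1) (hp0 : ∀ z, 0 ≤ p z)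
    (hp : HasSum p 1) (htail : ∀ z ≠ 0, p z ≤ 2 * exp (-(lam * z) ^ 2 / 2)) :
    ∑' z, negMulLog (p z) ≤ -16 * log lam := by
  have hS := tsum_negMulLog_le_log_of_tail hlam (by linarith) hp0 hp htail
  rw [log_div (by norm_num) (by positivity), log_pow] at hS
  have hlog : log lam ≤ -0.9 := by linarith [log_le_sub_one_of_pos hlam]
  have hlog4 : log 4 ≤ 3 := by linarith [log_le_sub_one_of_pos (by norm_num : (0 : ℝ) < 4)]
  push_cast at hS
  linarith

end TailBounds

lemma abs_round_le_two_mul_abs {α : Type*} [Field α] [LinearOrder α] [IsStrictOrderedRing α]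
    [FloorRing α] (x : α) : |(round x : α)| ≤ 2 * |x| := by
  by_cases h : round x = 0
  · simp [h]
  have hx : 1 / 2 ≤ |x| := by
    rw [round_eq_zero_iff, Set.mem_Ico, not_and_or, not_le, not_lt] at h
    rcases h with h | h
    · rw [abs_of_neg (by linarith)]; linarith
    · rw [abs_of_pos (by linarith)]; exact h
  have := abs_sub_round x
  calc |(round x : α)| ≤ |x| + |x - round x| := by
        have := abs_sub_abs_le_abs_sub (round x : α) x
        rw [abs_sub_comm] at this; linarith
    _ ≤ 2 * |x| := by linarith

lemma Measurable.round {α : Type*} [MeasurableSpace α] {f : α → ℝ} (hf : Measurable f) :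
    Measurable fun x => round (f x) := by
  simpa only [round_eq] using (hf.add_const _).floor

lemma hasSum_measureReal_preimage_singleton {Ω β : Type*} [MeasurableSpace Ω] [MeasurableSpace β]
    [Countable β] [MeasurableSingletonClass β] {μ : Measure Ω} [IsFiniteMeasure μ] {X : Ω → β}
    (hX : Measurable X) : HasSum (fun b => μ.real (X ⁻¹' {b})) (μ.real Set.univ) := by
  have hsum : ∑' b, μ (X ⁻¹' {b}) = μ Set.univ := by
    rw [← measure_iUnion (fun b c hbc => Set.disjoint_singleton.2 hbc |>.preimage X)
      fun b => hX (measurableSet_singleton b), ← Set.preimage_iUnion, Set.iUnion_of_singleton,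
      Set.preimage_univ]
  have := ENNReal.hasSum_toReal (hsum ▸ measure_ne_top μ _)
  rwa [← ENNReal.tsum_toReal_eq fun _ => measure_ne_top μ _, hsum] at this

def HasGaussianTails {Ω : Type*} [MeasurableSpace Ω] (μ : Measure Ω) (E : Ω → ℝ) (M : ℝ) : Prop :=
  ∀ α : ℝ, 0 < α →
    μ {ω | α * M ≤ E ω} ≤ ENNReal.ofReal (exp (-α ^ 2 / 2)) ∧
    μ {ω | E ω ≤ -(α * M)} ≤ ENNReal.ofReal (exp (-α ^ 2 / 2))

namespace HasGaussianTails

variable {Ω : Type*} [MeasurableSpace Ω] {μ : Measure Ω} {E : Ω → ℝ} {M lam : ℝ}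

lemma measureReal_le_abs (h : HasGaussianTails μ E M) {α : ℝ} (hα : 0 < α) :
    μ.real {ω | α * M ≤ |E ω|} ≤ 2 * exp (-α ^ 2 / 2) := by
  have hsub : {ω | α * M ≤ |E ω|} ⊆ {ω | α * M ≤ E ω} ∪ {ω | E ω ≤ -(α * M)} :=
    fun ω (hω : α * M ≤ |E ω|) => (le_abs'.1 hω).symm
  refine ENNReal.toReal_le_of_le_ofReal (by positivity) ?_
  calc μ {ω | α * M ≤ |E ω|} ≤ μ ({ω | α * M ≤ E ω} ∪ {ω | E ω ≤ -(α * M)}) := measure_mono hsub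
    _ ≤ μ {ω | α * M ≤ E ω} + μ {ω | E ω ≤ -(α * M)} := measure_union_le _ _
    _ ≤ ENNReal.ofReal (exp (-α ^ 2 / 2)) + ENNReal.ofReal (exp (-α ^ 2 / 2)) :=
        add_le_add (h α hα).1 (h α hα).2
    _ = ENNReal.ofReal (2 * exp (-α ^ 2 / 2)) := by
        rw [← ENNReal.ofReal_add (by positivity) (by positivity), two_mul]

lemma measureReal_le_abs_round [IsFiniteMeasure μ] (h : HasGaussianTails μ E M) (hM : 0 < M)
    (hlam : 0 < lam) {n : ℤ} (hn : 0 < n) :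
    μ.real {ω | n ≤ |round (E ω / (2 * lam * M))|} ≤ 2 * exp (-(lam * n) ^ 2 / 2) := by
  refine (measureReal_mono fun ω (hω : n ≤ _) => ?_).trans
    (h.measureReal_le_abs (α := lam * n) (by positivity))
  have hround := abs_round_le_two_mul_abs (E ω / (2 * lam * M))
  rw [abs_div, abs_of_pos (by positivity : 0 < 2 * lam * M)] at hround
  have hn' : (n : ℝ) ≤ |(round (E ω / (2 * lam * M)) : ℝ)| := by exact_mod_cast hω
  show lam * n * M ≤ |E ω|
  have := hn'.trans hround
  rw [mul_div_assoc', le_div_iff₀ (by positivity)] at this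
  nlinarith

lemma measureReal_round_eq_le [IsFiniteMeasure μ] (h : HasGaussianTails μ E M) (hM : 0 < M)
    (hlam : 0 < lam) {z : ℤ} (hz : z ≠ 0) :
    μ.real {ω | round (E ω / (2 * lam * M)) = z} ≤ 2 * exp (-(lam * z) ^ 2 / 2) := by
  have := h.measureReal_le_abs_round hM hlam (abs_pos.2 hz)
  rw [Int.cast_abs, mul_pow, sq_abs, ← mul_pow] at this
  exact (measureReal_mono fun ω (hω : _ = z) => by simp [hω]).trans this

lemma one_sub_measureReal_round_eq_zero_le [IsProbabilityMeasure μ] (h : HasGaussianTails μ E M)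
    (hE : Measurable E) (hM : 0 < M) (hlam : 0 < lam) :
    1 - μ.real {ω | round (E ω / (2 * lam * M)) = 0} ≤ 2 * exp (-lam ^ 2 / 2) := by
  have hmeas : MeasurableSet {ω | round (E ω / (2 * lam * M)) = 0} :=
    (hE.div_const _).round (measurableSet_singleton 0)
  have := h.measureReal_le_abs_round hM hlam one_pos
  rw [Int.cast_one, mul_one] at this
  rw [← probReal_compl_eq_one_sub hmeas]
  exact (measureReal_mono fun ω (hω : _ ≠ 0) => Int.one_le_abs hω).trans this

end HasGaussianTails

lemma intEntropy_eq_tsum_negMulLog {Ω : Type*} [MeasurableSpace Ω] (μ : Measure Ω)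
    (X : Ω → ℤ) : intEntropy μ X = (∑' z, negMulLog (μ.real (X ⁻¹' {z}))) / log 2 := by
  rw [intEntropy, ← tsum_neg, ← tsum_div_const]
  congr 1 with z
  rw [measureReal_def, logb, negMulLog]
  ring

/-- **Entropy of a rounded subgaussian random variable (Lemma 12 in Matousek '96).**
There is an absolute constant `C₀ > 0` such that: if a real random variable `E`
satisfies the tail bounds `P(E ≥ αM) ≤ e^{−α²/2}` and `P(E ≤ −αM) ≤ e^{−α²/2}` for all
`α > 0`, and `b(E)` is `E` rounded to the nearest integer multiple of `Δ = 2λM`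
(recorded by the integer `round(E/Δ)`), then `H(b(E)) ≤ G(λ)` where
`G(λ) = C₀ e^{−λ²/9}` for `λ ≥ 10`, `G(λ) = C₀` for `0.1 < λ < 10`, and
`G(λ) = −C₀ log₂ λ` for `λ ≤ 0.1`. -/
theorem entropy_tail_bound :
    ∃ C₀ : ℝ, 0 < C₀ ∧
    ∀ (Ω : Type) [MeasurableSpace Ω] (μ : Measure Ω), IsProbabilityMeasure μ →
    ∀ E : Ω → ℝ, Measurable E →
    ∀ M : ℝ, 0 < M →
      (∀ α : ℝ, 0 < α →
        μ {ω | α * M ≤ E ω} ≤ ENNReal.ofReal (Real.exp (-α ^ 2 / 2)) ∧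
        μ {ω | E ω ≤ -(α * M)} ≤ ENNReal.ofReal (Real.exp (-α ^ 2 / 2))) →
    ∀ lam : ℝ, 0 < lam →
      intEntropy μ (fun ω => round (E ω / (2 * lam * M))) ≤
        (if 10 ≤ lam then C₀ * Real.exp (-lam ^ 2 / 9)
         else if lam ≤ 0.1 then -(C₀ * Real.logb 2 lam)
         else C₀) := by
  refine ⟨5000, by norm_num, fun Ω _ μ _ E hE M hM htail lam hlam => ?_⟩
  have hgauss : HasGaussianTails μ E M := htail
  set p : ℤ → ℝ := fun z => μ.real ((fun ω => round (E ω / (2 * lam * M))) ⁻¹' {z})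
  have hp0 : ∀ z, 0 ≤ p z := fun z => measureReal_nonneg
  have hp : HasSum p 1 := by
    simpa using hasSum_measureReal_preimage_singleton (μ := μ) (hE.div_const _).round
  have hcenter : 1 - p 0 ≤ 2 * exp (-lam ^ 2 / 2) :=
    hgauss.one_sub_measureReal_round_eq_zero_le hE hM hlam
  have hptail : ∀ z ≠ 0, p z ≤ 2 * exp (-(lam * z) ^ 2 / 2) :=
    fun z hz => hgauss.measureReal_round_eq_le hM hlam hz
  have hlog2 : 0.69 < log 2 := by linarith [log_two_gt_d9]
  rw [intEntropy_eq_tsum_negMulLog, div_le_iff₀ (by positivity)]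
  split_ifs with hlarge hsmall
  · nlinarith [tsum_negMulLog_le_of_ten_le hlarge hp0 hp hcenter hptail, exp_pos (-lam ^ 2 / 9)]
  · have hlog2' : log 2 ≠ 0 := by positivity
    rw [logb, show -(5000 * (log lam / log 2)) * log 2 = -5000 * log lam by field_simp]
    nlinarith [tsum_negMulLog_le_neg_log hlam hsmall hp0 hp hptail, log_neg hlam (by linarith)]
  · nlinarith [tsum_negMulLog_le_of_one_tenth_lt (not_le.1 hsmall) hp0 hp hcenter hptail]
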